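/- Let n balls be thrown independently into n bins where each ball lands in bin i with probability p_i, and let Z = max_i X_i be the maximum bin load. Then E_p[Z] is a Schur-convex function of p = (p_1,...,p_n); in particular E_p[Z] ≥ E_u[Z], where u is the uniform distribution (1/n,...,1/n). -/

import Mathlib

/-- Sum of the `k` largest entries of `x : Fin n → ℝ`. -/
noncomputable def topSum {n : ℕ} (x : Fin n → ℝ) (k : ℕ) : ℝ :=
  sSup {t : ℝ | ∃ s : Finset (Fin n), s.card = k ∧ t = ∑ i ∈ s, x i}

/-- `x` majorizes `y`. -/
def Majorizes {n : ℕ} (x y : Fin n → ℝ) : Prop :=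
  (∀ k ≤ n, topSum y k ≤ topSum x k) ∧ ∑ i, x i = ∑ i, y i

/-- The load of bin `v` under the outcome `ω` assigning each of the `m` balls to a bin. -/
def load {m n : ℕ} (ω : Fin m → Fin n) (v : Fin n) : ℕ :=
  (Finset.univ.filter fun b => ω b = v).card

/-- The maximum bin load `Z = max_i X_i`. -/
def maxLoad {m n : ℕ} (ω : Fin m → Fin n) : ℕ :=
  Finset.univ.sup (load ω)

/-- Expected maximum load when `n` balls are thrown independently into `n` bins,
each ball landing in bin `i` with probability `p i` (so the load vector is
multinomial with `n` trials and probabilities `p`). -/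
noncomputable def expMaxLoad {n : ℕ} (p : Fin n → ℝ) : ℝ :=
  ∑ ω : Fin n → Fin n, (∏ b, p (ω b)) * (maxLoad ω : ℝ)

/-!
The argument works for any symmetric function `φ` of the load vector `X` that does not increase
under Robin Hood transfers, the maximum being one. Sort `p` and `q` decreasingly (the expectation
and majorization are both invariant under relabelling the bins) and follow the segment from `q` to
`p`, which stays sorted. Differentiating with respect to the factor of one ball, the derivative of
`E_{m+1}[φ(X)]` along the segment is `(m + 1) ∑ₐ (pₐ - qₐ) E_m[φ(X + eₐ)]`. At a sorted point
`E_m[φ(X + eₐ)]` is antitone in `a` (the Schur–Ostrowski condition; pair each outcome with its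
image under the transposition of the two bins), so Abel summation against the nonnegative prefix
sums of `p - q` makes the derivative nonnegative. The uniform vector is majorized by every
probability vector by Chebyshev's sum inequality.
-/

open Finset

section

variable {m n : ℕ}

lemma sum_le_sum_of_card_eq {α M : Type*} [AddCommMonoid M] [LinearOrder M]
    [IsOrderedAddMonoid M] {A B : Finset α} {f : α → M} (hAB : #A = #B)
    (h : ∀ a ∈ A, ∀ b ∈ B, f a ≤ f b) : ∑ a ∈ A, f a ≤ ∑ b ∈ B, f b := by
  obtain rfl | hB := B.eq_empty_or_nonempty
  · simp [card_eq_zero.1 hAB]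
  calc ∑ a ∈ A, f a ≤ #A • B.inf' hB f :=
        sum_le_card_nsmul _ _ _ fun a ha => le_inf' hB _ fun b hb => h a ha b hb
    _ = #B • B.inf' hB f := by rw [hAB]
    _ ≤ ∑ b ∈ B, f b := card_nsmul_le_sum _ _ _ fun b hb => inf'_le _ hb

noncomputable def prefixSum (x : Fin n → ℝ) (k : ℕ) : ℝ :=
  ∑ i ∈ univ.filter fun i : Fin n => (i : ℕ) < k, x i

lemma prefixSum_comp_castSucc (x : Fin (n + 1) → ℝ) {k : ℕ} (hk : k ≤ n) :
    prefixSum (x ∘ Fin.castSucc) k = prefixSum x k := by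
  simp [prefixSum, sum_filter, Fin.sum_univ_castSucc, Nat.not_lt.2 hk]

lemma prefixSum_of_le (x : Fin n → ℝ) {k : ℕ} (hk : n ≤ k) : prefixSum x k = ∑ i, x i :=
  sum_congr (filter_true_of_mem fun i _ => i.2.trans_le hk) fun _ _ => rfl

lemma sum_mul_nonneg_of_prefixSum_nonneg_of_nonneg {d g : Fin n → ℝ} (hg : Antitone g)
    (hg0 : ∀ i, 0 ≤ g i) (hd : ∀ k ≤ n, 0 ≤ prefixSum d k) : 0 ≤ ∑ i, d i * g i := by
  induction n with
  | zero => simp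
  | succ n ih =>
    set c := g (Fin.last n)
    have hsplit : ∑ i, d i * g i =
        ∑ i : Fin n, d i.castSucc * (g i.castSucc - c) + c * ∑ i, d i := by
      simp only [Fin.sum_univ_castSucc, mul_sub, sum_sub_distrib, ← sum_mul]
      ring
    rw [hsplit]
    have hg' : Antitone fun i : Fin n => g i.castSucc - c := fun a b hab =>
      sub_le_sub_right (hg (Fin.castSucc_le_castSucc_iff.2 hab)) _
    refine add_nonneg (ih hg' (fun i => sub_nonneg.2 (hg (Fin.le_last _))) fun k hk => ?_)
      (mul_nonneg (hg0 _) ?_)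
    · exact (prefixSum_comp_castSucc d hk).symm ▸ hd k (by omega)
    · exact prefixSum_of_le d le_rfl ▸ hd _ le_rfl

lemma sum_mul_nonneg_of_prefixSum_nonneg {d g : Fin n → ℝ} (hg : Antitone g)
    (hd : ∀ k ≤ n, 0 ≤ prefixSum d k) (hd0 : ∑ i, d i = 0) : 0 ≤ ∑ i, d i * g i := by
  cases n with
  | zero => simp
  | succ n =>
    have h := sum_mul_nonneg_of_prefixSum_nonneg_of_nonneg (g := fun i => g i - g (Fin.last n))
      (fun a b hab => sub_le_sub_right (hg hab) _) (fun i => sub_nonneg.2 (hg (Fin.le_last _))) hd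
    simpa [mul_sub, sum_sub_distrib, ← sum_mul, hd0] using h

lemma Antitone.mul_sum_le_mul_prefixSum {x : Fin n → ℝ} (hx : Antitone x) {k : ℕ}
    (hk : k ≤ n) : k * ∑ i, x i ≤ n * prefixSum x k := by
  set χ : Fin n → ℝ := fun i => if (i : ℕ) < k then 1 else 0
  have hχ : Antitone χ := fun i j hij => by
    have := Fin.le_def.1 hij
    simp only [χ]
    split_ifs <;> first | omega | norm_num
  have hχsum : ∑ i, χ i = k := by simp [χ, sum_boole, Fin.card_filter_val_lt, hk]
  simpa [χ, hχsum, mul_comm, prefixSum, ← sum_filter] using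
    (hx.monovary hχ).sum_mul_sum_le_card_mul_sum

lemma exists_perm_antitone {α : Type*} [LinearOrder α] (x : Fin n → α) :
    ∃ σ : Equiv.Perm (Fin n), Antitone (x ∘ σ) :=
  ⟨Fin.revPerm.trans (Tuple.sort x), (Tuple.monotone_sort x).comp_antitone Fin.rev_anti⟩

lemma topSum_comp_perm (x : Fin n → ℝ) (σ : Equiv.Perm (Fin n)) (k : ℕ) :
    topSum (x ∘ σ) k = topSum x k := by
  unfold topSum
  congr 1
  ext t
  constructor
  · rintro ⟨s, hs, rfl⟩
    exact ⟨s.map σ.toEmbedding, by simpa using hs, by rw [sum_map]; rfl⟩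
  · rintro ⟨s, hs, rfl⟩
    exact ⟨s.map σ.symm.toEmbedding, by simpa using hs, by simp [sum_map]⟩

lemma topSum_eq_prefixSum {x : Fin n → ℝ} (hx : Antitone x) {k : ℕ} (hk : k ≤ n) :
    topSum x k = prefixSum x k := by
  set P := univ.filter fun i : Fin n => (i : ℕ) < k
  have hP : #P = k := by simp [P, Fin.card_filter_val_lt, hk]
  refine IsGreatest.csSup_eq ⟨⟨P, hP, rfl⟩, ?_⟩
  rintro _ ⟨s, hs, rfl⟩
  rw [← sum_inter_add_sum_sdiff s P, prefixSum, ← sum_inter_add_sum_sdiff P s, inter_comm]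
  refine add_le_add le_rfl (sum_le_sum_of_card_eq (card_sdiff_comm (hs.trans hP.symm))
    fun a ha b hb => hx ?_)
  simp only [P, mem_sdiff, mem_filter, mem_univ, true_and] at ha hb
  exact Fin.le_def.2 (by omega)

lemma majorizes_uniform {p : Fin n → ℝ} (hp : ∑ i, p i = 1) :
    Majorizes p fun _ => 1 / (n : ℝ) := by
  have hn : (0 : ℝ) < n := by
    rcases Nat.eq_zero_or_pos n with rfl | h
    · simp at hp
    · exact_mod_cast h
  refine ⟨fun k hk => ?_, by simp [hp, hn.ne']⟩
  obtain ⟨σ, hσ⟩ := exists_perm_antitone p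
  have h := hσ.mul_sum_le_mul_prefixSum hk
  rw [show ∑ i, (p ∘ σ) i = 1 from (Equiv.sum_comp σ p).trans hp] at h
  have hconst : prefixSum (fun _ : Fin n => 1 / (n : ℝ)) k = k / n := by
    simp [prefixSum, Fin.card_filter_val_lt, hk, div_eq_mul_inv]
  rw [topSum_eq_prefixSum antitone_const hk, ← topSum_comp_perm p σ, topSum_eq_prefixSum hσ hk,
    hconst, div_le_iff₀ hn]
  linarith

lemma load_comp_perm (σ : Equiv.Perm (Fin n)) (ω : Fin m → Fin n) :
    load (σ ∘ ω) = load ω ∘ σ.symm := by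
  ext v
  simp only [load, Function.comp_apply, ← Equiv.eq_symm_apply]

lemma load_insertNth (b : Fin (m + 1)) (a : Fin n) (ω : Fin m → Fin n) :
    load (Fin.insertNth (α := fun _ => Fin n) b a ω) = load ω + Pi.single a 1 := by
  ext v
  simp only [load, card_filter, Fin.sum_univ_succAbove _ b, Fin.insertNth_apply_same,
    Fin.insertNth_apply_succAbove, Pi.add_apply, Pi.single_apply, eq_comm (a := a)]
  ring

lemma prod_apply_eq_prod_pow_load {M : Type*} [CommMonoid M] (y : Fin n → M)
    (ω : Fin m → Fin n) : ∏ b, y (ω b) = ∏ v, y v ^ load ω v := by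
  rw [← prod_fiberwise' univ ω y]
  exact prod_congr rfl fun v _ => prod_const _

lemma prod_erase_insertNth {M : Type*} [CommMonoid M] (y : Fin n → M) (b : Fin (m + 1))
    (a : Fin n) (ω : Fin m → Fin n) :
    ∏ c ∈ univ.erase b, y (Fin.insertNth (α := fun _ => Fin n) b a ω c) = ∏ c, y (ω c) := by
  rw [Fin.univ_succAbove m b, erase_cons, prod_map]
  simp

lemma prod_comp_swap_le {y : Fin n → ℝ} (hy : ∀ v, 0 ≤ y v) {i j : Fin n} (hij : y j ≤ y i)
    {ω : Fin m → Fin n} (hω : load ω j ≤ load ω i) :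
    ∏ b, y (Equiv.swap i j (ω b)) ≤ ∏ b, y (ω b) := by
  obtain rfl | hne := eq_or_ne i j
  · simp
  obtain ⟨c, hc⟩ := Nat.exists_eq_add_of_le hω
  have hrest : ∏ v ∈ {i, j}ᶜ, y (Equiv.swap i j v) ^ load ω v =
      ∏ v ∈ {i, j}ᶜ, y v ^ load ω v :=
    prod_congr rfl fun v hv => by
      rw [mem_compl, mem_insert, mem_singleton, not_or] at hv
      rw [Equiv.swap_apply_of_ne_of_ne hv.1 hv.2]
  change ∏ b, (y ∘ Equiv.swap i j) (ω b) ≤ _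
  rw [prod_apply_eq_prod_pow_load, prod_apply_eq_prod_pow_load,
    ← prod_mul_prod_compl {i, j}, ← prod_mul_prod_compl {i, j}, prod_pair hne, prod_pair hne]
  simp only [Function.comp_apply, Equiv.swap_apply_left, Equiv.swap_apply_right, hrest, hc]
  refine mul_le_mul_of_nonneg_right ?_ (prod_nonneg fun v _ => pow_nonneg (hy v) _)
  have := hy i; have := hy j
  calc y j ^ (load ω j + c) * y i ^ load ω j
      = (y i * y j) ^ load ω j * y j ^ c := by ring
    _ ≤ (y i * y j) ^ load ω j * y i ^ c := by gcongr
    _ = y i ^ (load ω j + c) * y j ^ load ω j := by ring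

lemma sum_perm_comp {f : (Fin m → Fin n) → ℝ} (σ : Equiv.Perm (Fin n)) :
    ∑ ω, f (σ ∘ ω) = ∑ ω, f ω :=
  (Equiv.piCongrRight fun _ => σ).sum_comp f

/-- Passing from `L + Pi.single i 1` to `L + Pi.single j 1` moves one unit from coordinate `i`
to a strictly smaller coordinate `j` (a Robin Hood transfer), which must not increase `φ`. -/
structure IsDiscreteSchurConvex (φ : (Fin n → ℕ) → ℝ) : Prop where
  comp_perm (L : Fin n → ℕ) (σ : Equiv.Perm (Fin n)) : φ (L ∘ σ) = φ L
  add_single_le (L : Fin n → ℕ) {i j : Fin n} (h : L j ≤ L i) :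
    φ (L + Pi.single j 1) ≤ φ (L + Pi.single i 1)

lemma IsDiscreteSchurConvex.comp_swap_add_single {φ : (Fin n → ℕ) → ℝ}
    (hφ : IsDiscreteSchurConvex φ) (L : Fin n → ℕ) (i j : Fin n) :
    φ (L ∘ Equiv.swap i j + Pi.single i 1) = φ (L + Pi.single j 1) := by
  rw [← hφ.comp_perm (L + Pi.single j 1) (Equiv.swap i j), Pi.add_comp, Pi.single_comp_equiv,
    Equiv.symm_swap, Equiv.swap_apply_right]

noncomputable def expectLoad (m : ℕ) (φ : (Fin n → ℕ) → ℝ) (y : Fin n → ℝ) : ℝ :=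
  ∑ ω : Fin m → Fin n, (∏ b, y (ω b)) * φ (load ω)

lemma IsDiscreteSchurConvex.expectLoad_comp_perm {φ : (Fin n → ℕ) → ℝ}
    (hφ : IsDiscreteSchurConvex φ) (y : Fin n → ℝ) (σ : Equiv.Perm (Fin n)) :
    expectLoad m φ (y ∘ σ) = expectLoad m φ y := by
  rw [expectLoad, expectLoad, ← sum_perm_comp σ.symm]
  refine sum_congr rfl fun ω _ => ?_
  rw [load_comp_perm, Equiv.symm_symm, hφ.comp_perm]
  simp only [Function.comp_apply, Equiv.apply_symm_apply]

lemma IsDiscreteSchurConvex.expectLoad_add_single_le {φ : (Fin n → ℕ) → ℝ}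
    (hφ : IsDiscreteSchurConvex φ) {y : Fin n → ℝ} (hy : ∀ v, 0 ≤ y v) {i j : Fin n}
    (hij : y j ≤ y i) :
    expectLoad m (fun L => φ (L + Pi.single j 1)) y ≤
      expectLoad m (fun L => φ (L + Pi.single i 1)) y := by
  set s := Equiv.swap i j
  set W : (Fin m → Fin n) → ℝ := fun ω => ∏ b, y (ω b)
  set Δ : (Fin m → Fin n) → ℝ := fun ω =>
    φ (load ω + Pi.single i 1) - φ (load ω + Pi.single j 1)
  have hΔ_swap : ∀ ω, Δ (s ∘ ω) = -Δ ω := fun ω => by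
    simp only [Δ, load_comp_perm, s, Equiv.symm_swap, hφ.comp_swap_add_single]
    rw [Equiv.swap_comm, hφ.comp_swap_add_single]
    ring
  have hpair : ∀ ω, 0 ≤ (W ω - W (s ∘ ω)) * Δ ω := fun ω => by
    rcases le_total (load ω j) (load ω i) with h | h
    · exact mul_nonneg (sub_nonneg.2 (prod_comp_swap_le hy hij h))
        (sub_nonneg.2 (hφ.add_single_le _ h))
    · have h' : load (s ∘ ω) j ≤ load (s ∘ ω) i := by simpa [load_comp_perm, s] using h
      have hW := prod_comp_swap_le hy hij h'
      simp only [Function.comp_apply, s, Equiv.swap_apply_self] at hW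
      exact mul_nonneg_of_nonpos_of_nonpos (sub_nonpos.2 hW)
        (sub_nonpos.2 (hφ.add_single_le _ h))
  have hsum : ∑ ω, W ω * Δ ω = -∑ ω, W (s ∘ ω) * Δ ω := by
    rw [← sum_perm_comp s, ← sum_neg_distrib]
    simp only [hΔ_swap, mul_neg]
  have hdiff : expectLoad m (fun L => φ (L + Pi.single i 1)) y -
      expectLoad m (fun L => φ (L + Pi.single j 1)) y = ∑ ω, W ω * Δ ω := by
    simp only [expectLoad, ← sum_sub_distrib, W, Δ, mul_sub]
  have h2 : 2 * ∑ ω, W ω * Δ ω = ∑ ω, (W ω - W (s ∘ ω)) * Δ ω := by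
    rw [two_mul]
    nth_rewrite 2 [hsum]
    rw [← sub_eq_add_neg, ← sum_sub_distrib]
    simp only [sub_mul]
  linarith [sum_nonneg fun ω (_ : ω ∈ univ) => hpair ω]

lemma sum_prod_erase_mul_eq (φ : (Fin n → ℕ) → ℝ) (b : Fin (m + 1)) (y d : Fin n → ℝ) :
    ∑ ω : Fin (m + 1) → Fin n, (∏ c ∈ univ.erase b, y (ω c)) * d (ω b) * φ (load ω) =
      ∑ a, d a * expectLoad m (fun L => φ (L + Pi.single a 1)) y := by
  rw [← (Fin.insertNthEquiv (fun _ => Fin n) b).sum_comp, Fintype.sum_prod_type]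
  refine sum_congr rfl fun a _ => ?_
  rw [expectLoad, mul_sum]
  refine sum_congr rfl fun ω _ => ?_
  have hω : Fin.insertNthEquiv (fun _ => Fin n) b (a, ω) = Fin.insertNth b a ω := rfl
  rw [hω, prod_erase_insertNth, Fin.insertNth_apply_same, load_insertNth]
  ring

lemma hasDerivAt_expectLoad_add_smul (φ : (Fin n → ℕ) → ℝ) (x d : Fin n → ℝ) (t : ℝ) :
    HasDerivAt (fun t => expectLoad (m + 1) φ (x + t • d))
      ((m + 1) * ∑ a, d a * expectLoad m (fun L => φ (L + Pi.single a 1)) (x + t • d)) t := by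
  have hcoord : ∀ v, HasDerivAt (fun t => (x + t • d) v) (d v) t := fun v => by
    simpa using ((hasDerivAt_id t).mul_const (d v)).const_add (x v)
  have hprod : ∀ ω : Fin (m + 1) → Fin n, HasDerivAt (fun t => ∏ c, (x + t • d) (ω c))
      (∑ b, (∏ c ∈ univ.erase b, (x + t • d) (ω c)) * d (ω b)) t := fun ω => by
    simpa using HasDerivAt.fun_finsetProd fun c (_ : c ∈ univ) => hcoord (ω c)
  refine (HasDerivAt.fun_sum fun ω (_ : ω ∈ univ) =>
    (hprod ω).mul_const (φ (load ω))).congr_deriv ?_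
  simp_rw [sum_mul]
  rw [sum_comm]
  simp_rw [sum_prod_erase_mul_eq, sum_const, card_univ, Fintype.card_fin, nsmul_eq_mul]
  push_cast
  ring

lemma IsDiscreteSchurConvex.expectLoad_le_of_prefixSum_le {φ : (Fin n → ℕ) → ℝ}
    (hφ : IsDiscreteSchurConvex φ) {p q : Fin n → ℝ} (hp : Antitone p) (hq : Antitone q)
    (hp0 : ∀ i, 0 ≤ p i) (hq0 : ∀ i, 0 ≤ q i) (hpre : ∀ k ≤ n, prefixSum q k ≤ prefixSum p k)
    (hsum : ∑ i, p i = ∑ i, q i) : expectLoad m φ q ≤ expectLoad m φ p := by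
  cases m with
  | zero => simp [expectLoad]
  | succ m =>
  set d := p - q
  have hy : ∀ t ∈ Set.Icc (0 : ℝ) 1, q + t • d = (1 - t) • q + t • p := fun t _ => by
    ext i; simp [d]; ring
  have hy0 : ∀ t ∈ Set.Icc (0 : ℝ) 1, ∀ i, 0 ≤ (q + t • d) i := fun t ht i => by
    rw [hy t ht]
    have := ht.1; have := ht.2; have := hp0 i; have := hq0 i
    simp only [Pi.add_apply, Pi.smul_apply, smul_eq_mul]
    positivity
  have hanti : ∀ t ∈ Set.Icc (0 : ℝ) 1, Antitone (q + t • d) := fun t ht a b hab => by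
    rw [hy t ht]
    have := hq hab; have := hp hab; have := ht.1; have : 0 ≤ 1 - t := by linarith [ht.2]
    simp only [Pi.add_apply, Pi.smul_apply, smul_eq_mul]
    gcongr
  have hmono : MonotoneOn (fun t : ℝ => expectLoad (m + 1) φ (q + t • d)) (Set.Icc 0 1) := by
    refine monotoneOn_of_hasDerivWithinAt_nonneg (convex_Icc 0 1)
      (fun t _ => (hasDerivAt_expectLoad_add_smul φ q d t).continuousAt.continuousWithinAt)
      (fun t _ => (hasDerivAt_expectLoad_add_smul φ q d t).hasDerivWithinAt) fun t ht => ?_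
    rw [interior_Icc] at ht
    have ht := Set.Ioo_subset_Icc_self ht
    refine mul_nonneg (by positivity) (sum_mul_nonneg_of_prefixSum_nonneg
      (fun a b hab => hφ.expectLoad_add_single_le (hy0 t ht) (hanti t ht hab)) (fun k hk => ?_) ?_)
    · simpa [prefixSum, d, sum_sub_distrib] using hpre k hk
    · simp [d, sum_sub_distrib, hsum]
  simpa [d] using hmono (Set.left_mem_Icc.2 zero_le_one) (Set.right_mem_Icc.2 zero_le_one)
    zero_le_one

lemma IsDiscreteSchurConvex.expectLoad_le_of_majorizes {φ : (Fin n → ℕ) → ℝ}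
    (hφ : IsDiscreteSchurConvex φ) {p q : Fin n → ℝ} (hp : ∀ i, 0 ≤ p i) (hq : ∀ i, 0 ≤ q i)
    (hpq : Majorizes p q) : expectLoad m φ q ≤ expectLoad m φ p := by
  obtain ⟨σ, hσ⟩ := exists_perm_antitone p
  obtain ⟨τ, hτ⟩ := exists_perm_antitone q
  rw [← hφ.expectLoad_comp_perm p σ, ← hφ.expectLoad_comp_perm q τ]
  refine hφ.expectLoad_le_of_prefixSum_le hσ hτ (fun _ => hp _) (fun _ => hq _)
    (fun k hk => ?_) ?_
  · rw [← topSum_eq_prefixSum hσ hk, ← topSum_eq_prefixSum hτ hk, topSum_comp_perm,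
      topSum_comp_perm]
    exact hpq.1 k hk
  · exact (Equiv.sum_comp σ p).trans (hpq.2.trans (Equiv.sum_comp τ q).symm)

lemma isDiscreteSchurConvex_sup :
    IsDiscreteSchurConvex fun L : Fin n → ℕ => ((univ.sup L : ℕ) : ℝ) where
  comp_perm L σ := by
    congr 1
    exact le_antisymm (Finset.sup_le fun v _ => Finset.le_sup (f := L) (mem_univ (σ v)))
      (Finset.sup_le fun v _ => by simpa using Finset.le_sup (f := L ∘ σ) (mem_univ (σ.symm v)))
  add_single_le L i j h := by
    refine Nat.cast_le.2 (Finset.sup_le fun v _ => ?_)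
    obtain rfl | hv := eq_or_ne v j
    · calc (L + Pi.single v 1 : Fin n → ℕ) v = L v + 1 := by simp
        _ ≤ (L + Pi.single i 1 : Fin n → ℕ) i := by simpa using h
        _ ≤ _ := Finset.le_sup (mem_univ i)
    · calc (L + Pi.single j 1 : Fin n → ℕ) v = L v := by simp [hv]
        _ ≤ (L + Pi.single i 1 : Fin n → ℕ) v := by simp
        _ ≤ _ := Finset.le_sup (mem_univ v)

end

theorem expMaxLoad_schurConvex_general {n : ℕ} (p : Fin n → ℝ)
    (hp : ∀ i, 0 ≤ p i) (hpsum : ∑ i, p i = 1) :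
    (∀ q : Fin n → ℝ, (∀ i, 0 ≤ q i) → ∑ i, q i = 1 →
        Majorizes p q → expMaxLoad q ≤ expMaxLoad p) ∧
      expMaxLoad (fun _ : Fin n => 1 / (n : ℝ)) ≤ expMaxLoad p :=
  ⟨fun _ hq _ hpq => isDiscreteSchurConvex_sup.expectLoad_le_of_majorizes hp hq hpq,
    isDiscreteSchurConvex_sup.expectLoad_le_of_majorizes hp (fun _ => by positivity)
      (majorizes_uniform hpsum)⟩

/-- `E_p[Z]` is a Schur-convex function of the probability vector `p`; in particular
it is at least the expected maximum load under the uniform distribution. -/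
theorem expMaxLoad_schurConvex {n : ℕ} (hn : 0 < n) (p : Fin n → ℝ)
    (hp : ∀ i, 0 ≤ p i) (hpsum : ∑ i, p i = 1) :
    (∀ q : Fin n → ℝ, (∀ i, 0 ≤ q i) → ∑ i, q i = 1 →
        Majorizes p q → expMaxLoad q ≤ expMaxLoad p) ∧
      expMaxLoad (fun _ : Fin n => 1 / (n : ℝ)) ≤ expMaxLoad p :=
  expMaxLoad_schurConvex_general p hp hpsum
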